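/- In any subtree T of the reduction graph G' rooted at r satisfying the capacity constraints, the vertex set of T cannot contain both x_i and x̄_i for any variable index i. -/
import Mathlib


open Finset

/-- A rooted tree on vertex type `V` with root `r`, encoded by a vertex set and a
parent function: every non-root vertex has a parent in the tree, and iterating
the parent function reaches the root. -/
structure RTree (V : Type) [DecidableEq V] (r : V) where
  verts : Finset V
  root_mem : r ∈ verts
  parent : V → V
  parent_mem : ∀ v ∈ verts, v ≠ r → parent v ∈ verts
  reach : ∀ v ∈ verts, ∃ n : ℕ, parent^[n] v = r

/-- Number of children of `v` in the rooted tree `T`. -/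
def RTree.children {V : Type} [DecidableEq V] {r : V} (T : RTree V r) (v : V) : ℕ :=
  (T.verts.filter fun w => w ≠ r ∧ T.parent w = v).card

/-- `T` is a subtree of the graph `G`: every parent-child pair is an edge of `G`. -/
def RTree.inGraph {V : Type} [DecidableEq V] {r : V} (T : RTree V r) (G : SimpleGraph V) : Prop :=
  ∀ v ∈ T.verts, v ≠ r → G.Adj (T.parent v) v

/-- A bounded rooted-tree packing: `K` subtrees of `G` rooted at `r`, with the total
number of children of each vertex bounded by its capacity. -/
def isPacking {V : Type} [DecidableEq V] [Fintype V] {r : V} (G : SimpleGraph V) (c : V → ℕ)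
    {K : ℕ} (T : Fin K → RTree V r) : Prop :=
  (∀ k, (T k).inGraph G) ∧ ∀ v : V, (∑ k, (T k).children v) ≤ c v

/-- The set of total spanned-vertex counts achievable by bounded rooted-tree packings. -/
def packSums {V : Type} [DecidableEq V] [Fintype V] (G : SimpleGraph V) (c : V → ℕ) (r : V)
    (K : ℕ) : Set ℕ :=
  {S | ∃ T : Fin K → RTree V r, isPacking G c T ∧ S = ∑ k, (T k).verts.card}

/-- Vertices of the 3-SAT reduction graph: the root, variable-gadget vertices,
literal vertices (`lit i true` is `xᵢ`, `lit i false` is `x̄ᵢ`) and clause vertices. -/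
inductive RVert (n m : ℕ) where
  | root : RVert n m
  | idx : Fin n → RVert n m
  | lit : Fin n → Bool → RVert n m
  | cls : Fin m → RVert n m
deriving DecidableEq

/-- The base adjacency relation of the reduction graph. `cl j l` is the `l`-th
literal (variable index, polarity) of clause `j`. -/
def redAdj {n m : ℕ} (cl : Fin m → Fin 3 → Fin n × Bool) : RVert n m → RVert n m → Prop
  | RVert.root, RVert.idx _ => True
  | RVert.idx i, RVert.lit i' _ => i = i'
  | RVert.lit i b, RVert.cls j => ∃ l : Fin 3, cl j l = (i, b)
  | _, _ => False

/-- The 3-SAT reduction graph `G'`. -/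
def redGraph {n m : ℕ} (cl : Fin m → Fin 3 → Fin n × Bool) : SimpleGraph (RVert n m) :=
  SimpleGraph.fromRel (redAdj cl)

/-- The capacity function of the reduction: `c_r = n`, `c_i = 1`,
`c_{xᵢ} = c_{x̄ᵢ} = m`, `c_{C_j} = 0`. -/
def redCap {n m : ℕ} : RVert n m → ℕ
  | RVert.root => n
  | RVert.idx _ => 1
  | RVert.lit _ _ => m
  | RVert.cls _ => 0

/-- In any capacity-respecting rooted subtree of the reduction graph `G'`, no variable
has both of its literal vertices `xᵢ` and `x̄ᵢ` spanned. -/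
theorem reduction_not_both_literals (n m : ℕ) (cl : Fin m → Fin 3 → Fin n × Bool)
    (T : RTree (RVert n m) RVert.root)
    (hg : T.inGraph (redGraph cl))
    (hc : ∀ v, T.children v ≤ redCap v) :
    ∀ i : Fin n, ¬(RVert.lit i true ∈ T.verts ∧ RVert.lit i false ∈ T.verts) := by
  intro i hpair
  obtain ⟨h1, h2⟩ := hpair
  have key : ∀ b : Bool, RVert.lit i b ∈ T.verts → T.parent (RVert.lit i b) = RVert.idx i := by
    intro b hb
    have hne : (RVert.lit i b : RVert n m) ≠ RVert.root := by simp
    have hadj := hg _ hb hne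
    rw [redGraph, SimpleGraph.fromRel_adj] at hadj
    obtain ⟨hpne, hp⟩ := hadj
    rcases hpar : T.parent (RVert.lit i b) with _ | i' | ⟨i', b'⟩ | j
    all_goals rw [hpar] at hp hpne
    · exfalso; rcases hp with h | h <;> simp [redAdj] at h
    · rcases hp with h | h
      · simp only [redAdj] at h; subst h; rfl
      · simp [redAdj] at h
    · exfalso; rcases hp with h | h <;> simp [redAdj] at h
    · exfalso
      have hmem : RVert.cls j ∈ T.verts := by
        have := T.parent_mem _ hb hne; rwa [hpar] at this
      have hone : 1 ≤ T.children (RVert.cls j) := by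
        rw [RTree.children]
        refine Finset.card_pos.mpr ⟨RVert.lit i b, ?_⟩
        simp [Finset.mem_filter, hb, hne, hpar]
      have := hc (RVert.cls j)
      simp [redCap] at this
      omega
  have p1 := key true h1
  have p2 := key false h2
  have hsub : ({RVert.lit i true, RVert.lit i false} : Finset (RVert n m)) ⊆
      T.verts.filter fun w => w ≠ RVert.root ∧ T.parent w = RVert.idx i := by
    intro w hw
    simp only [Finset.mem_insert, Finset.mem_singleton] at hw
    rcases hw with rfl | rfl <;> simp [Finset.mem_filter, h1, h2, p1, p2]
  have h2' : 2 ≤ T.children (RVert.idx i) := by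
    rw [RTree.children]
    calc 2 = ({RVert.lit i true, RVert.lit i false} : Finset (RVert n m)).card := by simp
    _ ≤ _ := Finset.card_le_card hsub
  have := hc (RVert.idx i)
  simp [redCap] at this
  omega
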